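/- Let $\mathbbm{k}$ be an algebraically closed field of characteristic $p>0$, and let $\alpha_1,\dots,\alpha_k, \beta_1,\dots,\beta_k \in \mathbbm{k}$ be such that the rational function $\prod_{i=1}^k \frac{u+\alpha_i}{u+\beta_i}$ is restricted, i.e. $\prod_{j=0}^{p-1}\prod_{i=1}^{k} \frac{u-j+\alpha_i}{u-j+\beta_i} = 1$. Then for each index $i$ there exists an index $j$ with $\alpha_i - \beta_j \in \mathbb{F}_p$. -/

import Mathlib

/-!
Clearing denominators, the restricted condition says that the polynomials
`∏_{j<p} ∏ᵢ (X + αᵢ - j)` and `∏_{j<p} ∏ᵢ (X + βᵢ - j)` coincide. The root `-αᵢ` of the first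
(factor `j = 0`) is therefore a root `j - βᵢ'` of the second, so `αᵢ - βᵢ'` is an integer,
hence fixed by Frobenius.
-/

open Polynomial

section ShiftedLinearProduct

variable {K : Type*} [Field K] {ι : Type*} [Fintype ι]

/-- Numerator (for `a = α`) and denominator (for `a = β`) of `g(u) g(u-1) ⋯ g(u-n+1)`,
where `g(u) = ∏ᵢ (u + αᵢ) / (u + βᵢ)`. -/
noncomputable def shiftedLinearProduct (n : ℕ) (a : ι → K) : K[X] :=
  ∏ j ∈ Finset.range n, ∏ i, (X + C (a i - j))

theorem shiftedLinearProduct_ne_zero (n : ℕ) (a : ι → K) : shiftedLinearProduct n a ≠ 0 :=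
  Finset.prod_ne_zero_iff.mpr fun _ _ => Finset.prod_ne_zero_iff.mpr fun _ _ => X_add_C_ne_zero _

theorem algebraMap_shiftedLinearProduct (n : ℕ) (a : ι → K) :
    algebraMap K[X] (RatFunc K) (shiftedLinearProduct n a) =
      ∏ j ∈ Finset.range n, ∏ i, (RatFunc.X - (j : RatFunc K) + RatFunc.C (a i)) := by
  simp only [shiftedLinearProduct, map_prod, map_add, map_sub, map_natCast,
    RatFunc.algebraMap_X, RatFunc.algebraMap_C]
  exact Finset.prod_congr rfl fun _ _ => Finset.prod_congr rfl fun _ _ => by ring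

theorem shiftedLinearProduct_eq_of_prod_div_eq_one {n : ℕ} {α β : ι → K}
    (h : ∏ j ∈ Finset.range n, ∏ i,
        (RatFunc.X - (j : RatFunc K) + RatFunc.C (α i)) /
          (RatFunc.X - (j : RatFunc K) + RatFunc.C (β i)) = 1) :
    shiftedLinearProduct n α = shiftedLinearProduct n β := by
  have hβ : algebraMap K[X] (RatFunc K) (shiftedLinearProduct n β) ≠ 0 :=
    (map_ne_zero_iff _ (RatFunc.algebraMap_injective K)).mpr (shiftedLinearProduct_ne_zero n β)
  apply RatFunc.algebraMap_injective K
  rw [← div_eq_one_iff_eq hβ, ← h, algebraMap_shiftedLinearProduct,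
    algebraMap_shiftedLinearProduct]
  simp only [Finset.prod_div_distrib]

theorem eval_shiftedLinearProduct_eq_zero_iff (n : ℕ) (a : ι → K) (x : K) :
    (shiftedLinearProduct n a).eval x = 0 ↔ ∃ j < n, ∃ i, x + a i = j := by
  simp [shiftedLinearProduct, eval_prod, Finset.prod_eq_zero_iff, ← add_sub_assoc, sub_eq_zero]

end ShiftedLinearProduct

theorem intCast_pow_char {R : Type*} [CommRing R] (p : ℕ) [ExpChar R p] (m : ℤ) :
    (m : R) ^ p = m := by
  rw [← frobenius_def, map_intCast]

theorem restricted_ratio_matching_general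
    (p : ℕ) [Fact p.Prime] (𝕜 : Type*) [Field 𝕜] [CharP 𝕜 p]
    (k : ℕ) (α β : Fin k → 𝕜)
    (h : ∏ j ∈ Finset.range p, ∏ i : Fin k,
        ((RatFunc.X : RatFunc 𝕜) - (j : RatFunc 𝕜) + RatFunc.C (α i)) /
          ((RatFunc.X : RatFunc 𝕜) - (j : RatFunc 𝕜) + RatFunc.C (β i)) = 1) :
    ∀ i : Fin k, ∃ j : Fin k, (α i - β j) ^ p = α i - β j := by
  intro i
  have hroot : (shiftedLinearProduct p α).eval (-α i) = 0 :=
    (eval_shiftedLinearProduct_eq_zero_iff p α _).mpr ⟨0, (Fact.out : p.Prime).pos, i, by simp⟩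
  rw [shiftedLinearProduct_eq_of_prod_div_eq_one h, eval_shiftedLinearProduct_eq_zero_iff] at hroot
  obtain ⟨j, -, i', hi'⟩ := hroot
  have hdiff : α i - β i' = ((-j : ℤ) : 𝕜) := by
    push_cast
    linear_combination -hi'
  exact ⟨i', by rw [hdiff, intCast_pow_char]⟩

/-- if the rational function `∏ᵢ (u+αᵢ)/(u+βᵢ)` is restricted,
i.e. `∏_{j=0}^{p-1} ∏ᵢ (u-j+αᵢ)/(u-j+βᵢ) = 1`, then for each `i` there is `j`
with `αᵢ - βⱼ ∈ 𝔽_p` (equivalently `(αᵢ - βⱼ)^p = αᵢ - βⱼ`). -/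
theorem restricted_ratio_matching
    (p : ℕ) [Fact p.Prime] (𝕜 : Type*) [Field 𝕜] [IsAlgClosed 𝕜] [CharP 𝕜 p]
    (k : ℕ) (α β : Fin k → 𝕜)
    (h : ∏ j ∈ Finset.range p, ∏ i : Fin k,
        ((RatFunc.X : RatFunc 𝕜) - (j : RatFunc 𝕜) + RatFunc.C (α i)) /
          ((RatFunc.X : RatFunc 𝕜) - (j : RatFunc 𝕜) + RatFunc.C (β i)) = 1) :
    ∀ i : Fin k, ∃ j : Fin k, (α i - β j) ^ p = α i - β j :=
  restricted_ratio_matching_general p 𝕜 k α β h
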